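/- Let ω be an arbitrary factor of the period-doubling sequence D. (1) If Env(ω) = E_{1,m} for some m ≥ 1, then for every p ≥ 1: r_p(ω) = r_1(ω) if Θ_1[p] = a, and r_p(ω) = r_2(ω) if Θ_1[p] = b; i.e., the return word sequence {r_p(ω)}_{p≥1} is Θ_1 over the alphabet {r_1(ω), r_2(ω)}. (2) If Env(ω) = E_{2,m} for some m ≥ 1, then for every p ≥ 1: r_p(ω) = r_1(ω) if Θ_2[p] = a, r_p(ω) = r_2(ω) if Θ_2[p] = b, and r_p(ω) = r_4(ω) if Θ_2[p] = c; i.e., the return word sequence {r_p(ω)}_{p≥1} is Θ_2 over the alphabet {r_1(ω), r_2(ω), r_4(ω)}. -/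

import Mathlib

/-- The alphabet: letters a, b (for the period-doubling sequence) and c (used by Θ₂). -/
inductive Letter : Type
  | a | b | c
deriving DecidableEq, Repr

open Letter

/-- The period-doubling substitution σ : a ↦ ab, b ↦ aa, extended to words
(the extra letter c is left untouched; it is never produced). -/
def sigmaw : List Letter → List Letter :=
  fun w => w.flatMap fun x => match x with
    | .a => [.a, .b]
    | .b => [.a, .a]
    | .c => [.c]

/-- A_m = σ^m(a). -/
def A (m : ℕ) : List Letter := sigmaw^[m] [.a]

/-- B_m = σ^m(b). -/
def B (m : ℕ) : List Letter := sigmaw^[m] [.b]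

/-- δ_m, the last letter of A_m. -/
def delta (m : ℕ) : Letter := (A m).getLastD .a

/-- The period-doubling sequence D, as a function giving its (n+1)-st letter
(0-indexed); it is the fixed point of σ beginning with a, and A_{n+1} is a
prefix of it of length 2^{n+1} > n. -/
def D (n : ℕ) : Letter := (A (n + 1)).getD n .a

/-- The finite segment D[i .. i+len−1] of the period-doubling sequence,
with 1-based starting position i. -/
def Dseg (i len : ℕ) : List Letter := (List.range len).map fun k => D (i - 1 + k)

/-- u occurs in the finite word w at (1-based) position i. -/
def OccursAt {α : Type*} (u w : List α) (i : ℕ) : Prop :=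
  1 ≤ i ∧ i - 1 + u.length ≤ w.length ∧ (w.drop (i - 1)).take u.length = u

/-- u is a factor of the finite word w. -/
def IsFactor {α : Type*} (u w : List α) : Prop := ∃ i, OccursAt u w i

/-- u occurs in the period-doubling sequence D at (1-based) position i. -/
def DOccursAt (u : List Letter) (i : ℕ) : Prop := 1 ≤ i ∧ Dseg i u.length = u

/-- u is a factor of the period-doubling sequence D. -/
def FactorD (u : List Letter) : Prop := ∃ i, DOccursAt u i

/-- L(u,p): the starting position of the p-th occurrence (p ≥ 1) of u in D. -/
noncomputable def L (u : List Letter) (p : ℕ) : ℕ := Nat.nth (DOccursAt u) (p - 1)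

/-- r_p(u): the p-th return word of u (p ≥ 1), i.e. D[L(u,p) .. L(u,p+1)−1];
r_0(u) is the prefix of D preceding the first occurrence of u. -/
noncomputable def r (u : List Letter) (p : ℕ) : List Letter :=
  if p = 0 then Dseg 1 (L u 1 - 1) else Dseg (L u p) (L u (p + 1) - L u p)

/-- The morphism τ₁ : a ↦ a, b ↦ bb, extended to words. -/
def tau1 : List Letter → List Letter :=
  fun w => w.flatMap fun x => match x with
    | .a => [.a]
    | .b => [.b, .b]
    | .c => [.c]

/-- The morphism τ₂ : a ↦ ab, b ↦ acac, extended to words. -/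
def tau2 : List Letter → List Letter :=
  fun w => w.flatMap fun x => match x with
    | .a => [.a, .b]
    | .b => [.a, .c, .a, .c]
    | .c => [.c]

/-- Θ₁[p], the p-th letter (p ≥ 1) of Θ₁ = τ₁(D): since |τ₁(w)| ≥ |w|, the p-th
letter of Θ₁ is the p-th letter of the image of the length-p prefix of D. -/
def Theta1 (p : ℕ) : Letter := (tau1 (Dseg 1 p)).getD (p - 1) .a

/-- Θ₂[p], the p-th letter (p ≥ 1) of Θ₂ = τ₂(D). -/
def Theta2 (p : ℕ) : Letter := (tau2 (Dseg 1 p)).getD (p - 1) .a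

/-- The envelope word E_{1,m} = A_m with its last letter δ_m deleted. -/
def E1 (m : ℕ) : List Letter := (A m).dropLast

/-- The envelope word E_{2,m} = B_m B_{m−1} with its last letter δ_m deleted. -/
def E2 (m : ℕ) : List Letter := (B m ++ B (m - 1)).dropLast

/-- Enumeration of the envelope words in the order
E_{1,1} ⊏ E_{2,1} ⊏ E_{1,2} ⊏ E_{2,2} ⊏ …. -/
def Eword (k : ℕ) : List Letter := if k % 2 = 0 then E1 (k / 2 + 1) else E2 (k / 2 + 1)

/-- Env(u): the ⊏-least envelope word having u as a factor. -/
noncomputable def Env (u : List Letter) : List Letter :=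
  Eword (sInf {k | IsFactor u (Eword k)})

/-- The letterwise complement exchanging a and b. -/
def comp : Letter → Letter
  | .a => .b
  | .b => .a
  | .c => .c

/-!
A nonempty factor `ω` of `D` other than `a` and `aa` occurs at positions of one parity `c` only:
either it contains a `b`, which sits at odd positions, or it contains `a?a`, which sits at even
ones. Since `D = σ(D)`, its occurrences are then `2 i + c` for the occurrences `i` of a shorter
factor read off the odd positions, and passing to that factor lowers the envelope index by two.
Iterating, the occurrences of `ω` are `2^p i + t` (`t < 2^p`) for the occurrences `i` of the seed
`a` or `aa`, according to the parity of the envelope index. As `D = σ^p(D)`, the return word of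
`ω` at its `n`-th occurrence is cut out of `σ^p` of the `n`-th return word of the seed followed by
one more letter. For the seeds this is a finite computation in the blocks `σ(y)`, resp. `σ^3(y)`,
of the letters `y` of `D`: the occurrences of the seed in such a block correspond to the letters
of `τ₁(y)`, resp. `τ₂(y)`, and the return word at each of them is determined by that letter.
-/

namespace PeriodDoubling

lemma comp_comp (y : Letter) : comp (comp y) = y := by cases y <;> rfl

lemma sigmaw_append (u v : List Letter) : sigmaw (u ++ v) = sigmaw u ++ sigmaw v :=
  List.flatMap_append

lemma sigmaw_iterate_append (k : ℕ) (u v : List Letter) :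
    sigmaw^[k] (u ++ v) = sigmaw^[k] u ++ sigmaw^[k] v := by
  induction k generalizing u v with
  | zero => rfl
  | succ k ih => simp only [Function.iterate_succ_apply, sigmaw_append, ih]

lemma sigmaw_cons {y : Letter} (hy : y ≠ c) (w : List Letter) :
    sigmaw (y :: w) = a :: comp y :: sigmaw w := by
  cases y <;> first | rfl | exact absurd rfl hy

lemma A_succ (m : ℕ) : A (m + 1) = A m ++ B m :=
  sigmaw_iterate_append m [a] [b]

lemma B_succ (m : ℕ) : B (m + 1) = A m ++ A m :=
  sigmaw_iterate_append m [a] [a]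

lemma length_A_and_B (m : ℕ) : (A m).length = 2 ^ m ∧ (B m).length = 2 ^ m := by
  induction m with
  | zero => exact ⟨rfl, rfl⟩
  | succ m ih => simp [A_succ, B_succ, ih, pow_succ, mul_two]

lemma length_A (m : ℕ) : (A m).length = 2 ^ m := (length_A_and_B m).1

lemma length_B (m : ℕ) : (B m).length = 2 ^ m := (length_A_and_B m).2

lemma c_not_mem_A_and_B (m : ℕ) : c ∉ A m ∧ c ∉ B m := by
  induction m with
  | zero => decide
  | succ m ih => simp [A_succ, B_succ, ih]

lemma dropLast_A_eq_dropLast_B (m : ℕ) : (A m).dropLast = (B m).dropLast := by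
  induction m with
  | zero => rfl
  | succ m ih =>
    have hA : A m ≠ [] := List.ne_nil_of_length_pos (by simp [length_A])
    have hB : B m ≠ [] := List.ne_nil_of_length_pos (by simp [length_B])
    rw [A_succ, B_succ, List.dropLast_append_of_ne_nil hB, List.dropLast_append_of_ne_nil hA, ih]

lemma getD_sigmaw {w : List Letter} (hw : c ∉ w) {n : ℕ} (hn : n < w.length) :
    (sigmaw w).getD (2 * n) a = a ∧ (sigmaw w).getD (2 * n + 1) a = comp (w.getD n a) := by
  induction w generalizing n with
  | nil => simp at hn
  | cons y w ih =>
    rw [sigmaw_cons (fun h => hw (h ▸ List.mem_cons_self))]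
    cases n with
    | zero => exact ⟨rfl, rfl⟩
    | succ n =>
      rw [show 2 * (n + 1) = 2 * n + 1 + 1 by ring]
      simpa using ih (fun h => hw (List.mem_cons_of_mem y h)) (by simpa using hn)

lemma D_eq_getD_A {m n : ℕ} (hn : n < 2 ^ m) : D n = (A m).getD n a := by
  have getD_A_of_le : ∀ {m m'}, m ≤ m' → n < 2 ^ m → (A m').getD n a = (A m).getD n a := by
    intro m m' h hn
    have hpre : A m <+: A m' := by
      induction h with
      | refl => exact List.prefix_refl _
      | step _ ih => exact ih.trans (A_succ _ ▸ List.prefix_append _ _)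
    have hlt : n < (A m).length := length_A m ▸ hn
    rw [List.getD_eq_getElem _ _ hlt, List.getD_eq_getElem _ _ (hlt.trans_le hpre.length_le),
      hpre.getElem]
  have hn' : n < 2 ^ (n + 1) :=
    Nat.lt_two_pow_self.trans (Nat.pow_lt_pow_right one_lt_two n.lt_succ_self)
  rcases le_total m (n + 1) with h | h
  · exact getD_A_of_le h hn
  · exact (getD_A_of_le h hn').symm

lemma D_two_mul (n : ℕ) : D (2 * n) = a := by
  have h := Nat.lt_two_pow_self (n := n)
  rw [D_eq_getD_A (m := n + 1) (by rw [pow_succ]; omega), A, Function.iterate_succ_apply']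
  exact (getD_sigmaw (c_not_mem_A_and_B n).1 (by rw [length_A]; exact h)).1

lemma D_two_mul_add_one (n : ℕ) : D (2 * n + 1) = comp (D n) := by
  have h := Nat.lt_two_pow_self (n := n)
  rw [D_eq_getD_A (m := n + 1) (by rw [pow_succ]; omega), A, Function.iterate_succ_apply',
    D_eq_getD_A h]
  exact (getD_sigmaw (c_not_mem_A_and_B n).1 (by rw [length_A]; exact h)).2

lemma D_ne_c (n : ℕ) : D n ≠ c := by
  have hn : n < (A (n + 1)).length := by
    rw [length_A]
    exact Nat.lt_two_pow_self.trans (Nat.pow_lt_pow_right one_lt_two n.lt_succ_self)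
  rw [D, List.getD_eq_getElem _ _ hn]
  exact fun h => (c_not_mem_A_and_B _).1 (h ▸ List.getElem_mem hn)

/-- Positions in `seg`, `OccAt` and `Nat.nth (OccAt u)` are 0-based, unlike those in `Dseg`,
`DOccursAt` and `L`. -/
def seg (i n : ℕ) : List Letter := (List.range n).map fun j => D (i + j)

lemma Dseg_eq_seg (i n : ℕ) : Dseg i n = seg (i - 1) n := rfl

@[simp] lemma length_seg (i n : ℕ) : (seg i n).length = n := by simp [seg]

@[simp] lemma getElem_seg (i n j : ℕ) (hj : j < (seg i n).length) :
    (seg i n)[j] = D (i + j) := by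
  simp [seg]

lemma seg_add (i m n : ℕ) : seg i (m + n) = seg i m ++ seg (i + m) n := by
  simp only [seg, List.range_add, List.map_append, List.map_map]
  congr 2
  funext j
  simp [Nat.add_assoc]

lemma seg_one (i : ℕ) : seg i 1 = [D i] := rfl

lemma seg_two (i : ℕ) : seg i 2 = [D i, D (i + 1)] := rfl

lemma seg_eq_seg_iff {i i' n : ℕ} : seg i n = seg i' n ↔ ∀ j < n, D (i + j) = D (i' + j) := by
  simp [seg, List.map_inj_left]

lemma dropLast_seg (i n : ℕ) : (seg i n).dropLast = seg i (n - 1) := by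
  cases n with
  | zero => rfl
  | succ n => rw [seg_add, seg_one, List.dropLast_concat, Nat.add_sub_cancel]

lemma take_drop_seg {i m t n : ℕ} (h : t + n ≤ m) :
    ((seg i m).drop t).take n = seg (i + t) n := by
  obtain ⟨m, rfl⟩ := Nat.exists_eq_add_of_le h
  rw [Nat.add_assoc, seg_add, List.drop_left' (length_seg _ _), seg_add,
    List.take_left' (length_seg _ _)]

lemma seg_two_mul (i n : ℕ) : seg (2 * i) (2 * n) = sigmaw (seg i n) := by
  induction n with
  | zero => rfl
  | succ n ih =>
    rw [show 2 * (n + 1) = 2 * n + 2 by ring, seg_add, ih, seg_add, sigmaw_append, seg_one,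
      sigmaw_cons (D_ne_c _), show 2 * i + 2 * n = 2 * (i + n) by ring, seg_two, D_two_mul,
      D_two_mul_add_one]
    rfl

lemma seg_two_pow_mul (k i n : ℕ) : seg (2 ^ k * i) (2 ^ k * n) = sigmaw^[k] (seg i n) := by
  induction k with
  | zero => simp
  | succ k ih => rw [pow_succ', Nat.mul_assoc, Nat.mul_assoc, seg_two_mul, ih,
      Function.iterate_succ_apply']

lemma seg_two_pow_mul_two_pow (k q : ℕ) : seg (2 ^ k * q) (2 ^ k) = sigmaw^[k] [D q] := by
  rw [← seg_one, ← seg_two_pow_mul, mul_one]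

lemma dropLast_sigmaw_iterate {y : Letter} (hy : y ≠ c) (k : ℕ) :
    (sigmaw^[k] [y]).dropLast = (A k).dropLast := by
  cases y
  · rfl
  · exact (dropLast_A_eq_dropLast_B k).symm
  · exact absurd rfl hy

def OccAt (u : List Letter) (i : ℕ) : Prop := seg i u.length = u

instance (u : List Letter) : DecidablePred (OccAt u) := fun _ =>
  inferInstanceAs (Decidable (_ = _))

lemma dOccursAt_iff {u : List Letter} {i : ℕ} : DOccursAt u i ↔ 1 ≤ i ∧ OccAt u (i - 1) :=
  Iff.rfl

lemma factorD_iff {u : List Letter} : FactorD u ↔ ∃ i, OccAt u i :=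
  ⟨fun ⟨i, _, h⟩ => ⟨i - 1, h⟩, fun ⟨i, h⟩ => ⟨i + 1, by omega, h⟩⟩

lemma OccAt.D_add {u : List Letter} {i : ℕ} (h : OccAt u i) {j : ℕ} (hj : j < u.length) :
    D (i + j) = u[j] := by
  rw [← getElem_seg i u.length j (by simpa using hj)]
  exact List.getElem_of_eq h _

lemma isFactor_iff_infix {α : Type*} {u w : List α} : IsFactor u w ↔ u <:+: w := by
  constructor
  · rintro ⟨i, -, -, h⟩
    exact (h ▸ List.take_prefix _ _ : u <+: w.drop (i - 1)).isInfix.trans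
      (List.drop_suffix _ _).isInfix
  · rintro ⟨s, t, rfl⟩
    refine ⟨s.length + 1, by omega, by simp, ?_⟩
    simp [List.drop_left']

lemma isFactor_seg_iff {u : List Letter} {s l : ℕ} :
    IsFactor u (seg s l) ↔ ∃ i, s ≤ i ∧ i + u.length ≤ s + l ∧ OccAt u i := by
  constructor
  · rintro ⟨i, hi, hle, heq⟩
    rw [length_seg] at hle
    exact ⟨s + (i - 1), by omega, by omega, by rw [OccAt, ← take_drop_seg hle, heq]⟩
  · rintro ⟨i, hsi, hle, hocc⟩
    refine ⟨i - s + 1, by omega, by rw [length_seg]; omega, ?_⟩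
    rw [Nat.add_sub_cancel, take_drop_seg (by omega), Nat.add_sub_cancel' hsi]
    exact hocc

lemma E1_eq_seg (m : ℕ) : E1 m = seg 0 (2 ^ m - 1) := by
  rw [E1, A, show [a] = [D 0] from rfl, ← seg_two_pow_mul_two_pow, mul_zero, dropLast_seg]

lemma E2_succ_eq_seg (m : ℕ) : E2 (m + 1) = seg (2 ^ (m + 1)) (2 ^ (m + 1) + (2 ^ m - 1)) := by
  have hB : B m ≠ [] := List.ne_nil_of_length_pos (by simp [length_B])
  rw [E2, Nat.add_sub_cancel, List.dropLast_append_of_ne_nil hB, ← dropLast_A_eq_dropLast_B,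
    seg_add, B, A, show [b] = [D 1] from rfl, show [a] = [D 4] from rfl,
    ← seg_two_pow_mul_two_pow, ← seg_two_pow_mul_two_pow, mul_one, dropLast_seg]
  congr 3
  ring

lemma Eword_two_mul (j : ℕ) : Eword (2 * j) = E1 (j + 1) := by
  simp [Eword]

lemma Eword_two_mul_add_one (j : ℕ) : Eword (2 * j + 1) = E2 (j + 1) := by
  simp [Eword, Nat.add_mod, Nat.add_div]

lemma exists_Eword_eq_seg (k : ℕ) :
    ∃ s l, Eword k = seg s l ∧ Eword (k + 2) = seg (2 * s) (2 * l + 1) := by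
  obtain ⟨j, rfl | rfl⟩ := Nat.even_or_odd' k
  · refine ⟨0, 2 ^ (j + 1) - 1, by rw [Eword_two_mul, E1_eq_seg], ?_⟩
    rw [show 2 * j + 2 = 2 * (j + 1) by ring, Eword_two_mul, E1_eq_seg]
    have := Nat.one_le_two_pow (n := j)
    congr 1
    rw [pow_succ, pow_succ]
    omega
  · refine ⟨2 ^ (j + 1), 2 ^ (j + 1) + (2 ^ j - 1),
      by rw [Eword_two_mul_add_one, E2_succ_eq_seg], ?_⟩
    rw [show 2 * j + 1 + 2 = 2 * (j + 1) + 1 by ring, Eword_two_mul_add_one, E2_succ_eq_seg]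
    have := Nat.one_le_two_pow (n := j)
    rw [pow_succ, pow_succ]
    congr 1 <;> omega

lemma comp_injective : Function.Injective comp :=
  Function.LeftInverse.injective comp_comp

lemma D_eq_b_iff {n : ℕ} : D n = b ↔ ∃ j, D j = a ∧ n = 2 * j + 1 := by
  obtain ⟨j, rfl | rfl⟩ := Nat.even_or_odd' n
  · rw [D_two_mul]
    exact ⟨fun h => (by cases h), fun ⟨i, _, h⟩ => (by omega)⟩
  · rw [D_two_mul_add_one]
    constructor
    · exact fun h => ⟨j, comp_injective h, rfl⟩
    · rintro ⟨i, hi, h⟩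
      obtain rfl : i = j := by omega
      rw [hi]
      rfl

lemma odd_of_D_eq_b {n : ℕ} (h : D n = b) : Odd n := by
  obtain ⟨j, -, rfl⟩ := D_eq_b_iff.1 h
  exact odd_two_mul_add_one j

lemma even_of_D_eq_a_of_D_add_two_eq_a {n : ℕ} (h₀ : D n = a) (h₂ : D (n + 2) = a) :
    Even n := by
  obtain ⟨j, rfl | rfl⟩ := Nat.even_or_odd' n
  · exact even_two_mul j
  · rw [D_two_mul_add_one] at h₀
    rw [show 2 * j + 1 + 2 = 2 * (j + 1) + 1 by ring, D_two_mul_add_one] at h₂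
    obtain ⟨i, -, rfl⟩ := D_eq_b_iff.1 (comp_injective h₀ : D j = b)
    rw [show 2 * i + 1 + 1 = 2 * (i + 1) by ring, D_two_mul] at h₂
    cases h₂

lemma OccAt.mod_two_eq {ω : List Letter} {i₀ i : ℕ} (hne : ω ≠ []) (ha : ω ≠ [a])
    (haa : ω ≠ [a, a]) (h₀ : OccAt ω i₀) (h : OccAt ω i) : i % 2 = i₀ % 2 := by
  by_cases hb : b ∈ ω
  · obtain ⟨j, hj, hjb⟩ := List.getElem_of_mem hb
    obtain ⟨_, h1⟩ := odd_of_D_eq_b ((h.D_add hj).trans hjb)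
    obtain ⟨_, h2⟩ := odd_of_D_eq_b ((h₀.D_add hj).trans hjb)
    omega
  · obtain ⟨n, rfl⟩ : ∃ n, ω = List.replicate n a := by
      refine ⟨ω.length, List.eq_replicate_iff.2 ⟨rfl, fun y hy => ?_⟩⟩
      obtain ⟨j, hj, rfl⟩ := List.getElem_of_mem hy
      have := D_ne_c (i₀ + j)
      rw [h₀.D_add hj] at this
      cases hy : ω[j] <;> simp_all
    have hn : 3 ≤ n := by
      rcases n with _ | _ | _ | n <;> simp_all
    have heven : ∀ i, OccAt (List.replicate n a) i → Even i := fun i h =>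
      even_of_D_eq_a_of_D_add_two_eq_a ((h.D_add (j := 0) (by rw [List.length_replicate]; omega)).trans
        (List.getElem_replicate _)) ((h.D_add (j := 2) (by rw [List.length_replicate]; omega)).trans
        (List.getElem_replicate _))
    obtain ⟨_, h1⟩ := heven i h
    obtain ⟨_, h2⟩ := heven i₀ h₀
    omega

lemma seg_two_mul_add_eq_iff {i i' c n : ℕ} (hc : c ≤ 1) :
    seg (2 * i + c) n = seg (2 * i' + c) n ↔ seg i ((c + n) / 2) = seg i' ((c + n) / 2) := by
  simp only [seg_eq_seg_iff]
  constructor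
  · intro h j hj
    have := h (2 * j + 1 - c) (by omega)
    rwa [show 2 * i + c + (2 * j + 1 - c) = 2 * (i + j) + 1 by omega,
      show 2 * i' + c + (2 * j + 1 - c) = 2 * (i' + j) + 1 by omega, D_two_mul_add_one,
      D_two_mul_add_one, comp_injective.eq_iff] at this
  · intro h k hk
    obtain ⟨j, hj | hj⟩ := Nat.even_or_odd' (c + k)
    · rw [show 2 * i + c + k = 2 * (i + j) by omega, show 2 * i' + c + k = 2 * (i' + j) by omega,
        D_two_mul, D_two_mul]
    · rw [show 2 * i + c + k = 2 * (i + j) + 1 by omega,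
        show 2 * i' + c + k = 2 * (i' + j) + 1 by omega, D_two_mul_add_one, D_two_mul_add_one,
        h j (by omega)]

def ScaledOcc (u x : List Letter) (p t : ℕ) : Prop :=
  t < 2 ^ p ∧ ∀ i, OccAt u i ↔ ∃ k, OccAt x k ∧ i = 2 ^ p * k + t

lemma ScaledOcc.refl (x : List Letter) : ScaledOcc x x 0 0 :=
  ⟨by norm_num, fun i => by simp⟩

lemma ScaledOcc.trans {u v x : List Letter} {p t p' t' : ℕ} (h : ScaledOcc u v p t)
    (h' : ScaledOcc v x p' t') : ScaledOcc u x (p + p') (2 ^ p * t' + t) := by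
  refine ⟨?_, fun i => ?_⟩
  · calc 2 ^ p * t' + t < 2 ^ p * (t' + 1) := by
          rw [mul_add_one]
          exact Nat.add_lt_add_left h.1 _
      _ ≤ 2 ^ p * 2 ^ p' := Nat.mul_le_mul_left _ h'.1
      _ = 2 ^ (p + p') := (pow_add 2 p p').symm
  · rw [h.2]
    constructor
    · rintro ⟨j, hj, rfl⟩
      obtain ⟨k, hk, rfl⟩ := (h'.2 j).1 hj
      exact ⟨k, hk, by ring⟩
    · rintro ⟨k, hk, rfl⟩
      exact ⟨2 ^ p' * k + t', (h'.2 _).2 ⟨k, hk, rfl⟩, by ring⟩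

lemma scaledOcc_b_a : ScaledOcc [b] [a] 1 1 := by
  refine ⟨by norm_num, fun i => ?_⟩
  simp only [OccAt, List.length_singleton, seg_one, List.cons.injEq, and_true, pow_one]
  exact D_eq_b_iff

lemma exists_scaledOcc_one {ω : List Letter} {i₀ : ℕ} (hne : ω ≠ []) (ha : ω ≠ [a])
    (haa : ω ≠ [a, a]) (h₀ : OccAt ω i₀) :
    ∃ c w, w.length = (c + ω.length) / 2 ∧ ScaledOcc ω w 1 c := by
  have hc : i₀ % 2 ≤ 1 := Nat.le_of_lt_succ (Nat.mod_lt _ two_pos)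
  refine ⟨i₀ % 2, seg (i₀ / 2) ((i₀ % 2 + ω.length) / 2), length_seg _ _, by omega,
    fun i => ?_⟩
  simp only [OccAt, length_seg, pow_one, ← seg_two_mul_add_eq_iff hc]
  rw [Nat.div_add_mod]
  constructor
  · intro h
    have hi := h₀.mod_two_eq hne ha haa h
    refine ⟨i / 2, ?_, by omega⟩
    rw [show 2 * (i / 2) + i₀ % 2 = i by omega]
    exact h.trans h₀.symm
  · rintro ⟨j, hj, rfl⟩
    exact hj.trans h₀

noncomputable def envIndex (u : List Letter) : ℕ := sInf {k | IsFactor u (Eword k)}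

lemma isFactor_Eword_of_occAt {u : List Letter} {i : ℕ} (h : OccAt u i) :
    IsFactor u (Eword (2 * (i + u.length))) := by
  rw [Eword_two_mul, E1_eq_seg, isFactor_seg_iff]
  have := Nat.lt_two_pow_self (n := i + u.length + 1)
  exact ⟨i, Nat.zero_le _, by omega, h⟩

lemma isFactor_Eword_envIndex {u : List Letter} {i : ℕ} (h : OccAt u i) :
    IsFactor u (Eword (envIndex u)) :=
  Nat.sInf_mem (s := {k | IsFactor u (Eword k)}) ⟨_, isFactor_Eword_of_occAt h⟩

lemma eq_nil_or_of_isFactor_Eword {u : List Letter} {k : ℕ} (hk : k ≤ 1)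
    (h : IsFactor u (Eword k)) : u = [] ∨ u = [a] ∨ u = [a, a] := by
  have hinf : u <:+: [a, a] := by
    interval_cases k
    · exact (isFactor_iff_infix.1 h).trans (by decide)
    · exact isFactor_iff_infix.1 h
  obtain ⟨n, rfl⟩ : ∃ n, u = List.replicate n a :=
    ⟨u.length, List.eq_replicate_iff.2 ⟨rfl, fun y hy => by simpa using hinf.subset hy⟩⟩
  have := hinf.length_le
  simp only [List.length_replicate, List.length_cons, List.length_nil] at this
  interval_cases n <;> simp

lemma envIndex_a : envIndex [a] = 0 :=
  Nat.sInf_eq_zero.2 (Or.inl (isFactor_iff_infix.2 (by decide)))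

lemma envIndex_aa : envIndex [a, a] = 1 := by
  have h1 : IsFactor [a, a] (Eword 1) := isFactor_iff_infix.2 (by decide)
  refine le_antisymm (Nat.sInf_le h1) (Nat.one_le_iff_ne_zero.2 fun h0 => ?_)
  have h := isFactor_Eword_envIndex (u := [a, a]) (i := 2) rfl
  rw [h0, isFactor_iff_infix] at h
  exact absurd h (by decide)

/-- `Eword (k + 2)` is `σ (Eword k)` followed by an `a`. -/
lemma ScaledOcc.envIndex_eq {u w : List Letter} {c j : ℕ} (h : ScaledOcc u w 1 c)
    (hlen : w.length = (c + u.length) / 2) (hw : OccAt w j) (hne : u ≠ []) (ha : u ≠ [a])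
    (haa : u ≠ [a, a]) : envIndex u = envIndex w + 2 := by
  have hiff : ∀ k, IsFactor u (Eword (k + 2)) ↔ IsFactor w (Eword k) := by
    intro k
    obtain ⟨s, l, hk, hk2⟩ := exists_Eword_eq_seg k
    have hc := h.1
    simp only [hk, hk2, isFactor_seg_iff, h.2, pow_one]
    constructor
    · rintro ⟨_, hs, hl, j, hj, rfl⟩
      exact ⟨j, by omega, by omega, hj⟩
    · rintro ⟨j, hs, hl, hj⟩
      exact ⟨_, by omega, by omega, j, hj, rfl⟩
  have hu : OccAt u (2 ^ 1 * j + c) := (h.2 _).2 ⟨j, hw, rfl⟩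
  have h2 : 2 ≤ envIndex u := by
    by_contra hlt
    rcases eq_nil_or_of_isFactor_Eword (by omega) (isFactor_Eword_envIndex hu) with h | h | h <;>
      contradiction
  rw [envIndex, envIndex, ← Nat.sInf_add (p := fun k => IsFactor u (Eword k)) h2]
  simp only [hiff]

/-- The seed of the envelope with index `k`: the factor of `D` whose return words govern those
of every factor with envelope `Eword k`. -/
def envSeed (k : ℕ) : List Letter := if Even k then [a] else [a, a]

lemma envSeed_zero : envSeed 0 = [a] := by simp [envSeed]

lemma envSeed_one : envSeed 1 = [a, a] := by simp [envSeed]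

lemma envSeed_add_two (k : ℕ) : envSeed (k + 2) = envSeed k := by
  simp [envSeed, Nat.even_add]

theorem exists_scaledOcc_envSeed {ω : List Letter} (hne : ω ≠ []) (hω : ∃ i, OccAt ω i) :
    ∃ p t, ScaledOcc ω (envSeed (envIndex ω)) p t := by
  induction hn : ω.length using Nat.strong_induction_on generalizing ω with
  | _ n ih =>
  obtain ⟨i₀, h₀⟩ := hω
  by_cases ha : ω = [a]
  · subst ha
    rw [envIndex_a, envSeed_zero]
    exact ⟨0, 0, ScaledOcc.refl _⟩
  by_cases haa : ω = [a, a]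
  · subst haa
    rw [envIndex_aa, envSeed_one]
    exact ⟨0, 0, ScaledOcc.refl _⟩
  by_cases hb : ω = [b]
  · subst hb
    rw [scaledOcc_b_a.envIndex_eq rfl (rfl : OccAt [a] 0) (by simp) (by simp) (by simp),
      envSeed_add_two, envIndex_a, envSeed_zero]
    exact ⟨_, _, scaledOcc_b_a.trans (ScaledOcc.refl _)⟩
  have hlen : 2 ≤ ω.length := by
    obtain _ | ⟨y, _ | ⟨z, ω⟩⟩ := ω
    · exact absurd rfl hne
    · have := D_ne_c (i₀ + 0)
      rw [h₀.D_add (j := 0) (by simp)] at this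
      cases y <;> simp_all
    · simp
  obtain ⟨c, w, hw, hωw⟩ := exists_scaledOcc_one hne ha haa h₀
  have hc : c < 2 := hωw.1
  obtain ⟨j, hj, -⟩ := (hωw.2 i₀).1 h₀
  have hwne : w ≠ [] := List.ne_nil_of_length_pos (by omega)
  obtain ⟨p, t, hwx⟩ := ih w.length (by omega) hwne ⟨j, hj⟩ rfl
  rw [hωw.envIndex_eq hw hj hne ha haa, envSeed_add_two]
  exact ⟨_, _, hωw.trans hwx⟩

lemma ScaledOcc.nth_dOccursAt {ω x : List Letter} {p t : ℕ} (h : ScaledOcc ω x p t)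
    (hinf : (Set.ofPred (OccAt x)).Infinite) (n : ℕ) :
    Nat.nth (DOccursAt ω) n = 2 ^ p * Nat.nth (OccAt x) n + t + 1 := by
  have hpos : 0 < 2 ^ p := pow_pos two_pos p
  set f : ℕ → ℕ := fun k => 2 ^ p * k + t + 1
  have hf : StrictMono f := fun i j hij => by
    have := Nat.mul_lt_mul_of_pos_left hij hpos
    simp only [f]
    omega
  have hocc : ∀ k, DOccursAt ω (f k) ↔ OccAt x k := fun k => by
    simp only [f, dOccursAt_iff, Nat.add_sub_cancel, h.2]
    constructor
    · rintro ⟨-, k', hk', he⟩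
      rwa [Nat.eq_of_mul_eq_mul_left hpos (by omega : 2 ^ p * k = 2 ^ p * k')]
    · exact fun hk => ⟨by omega, k, hk, rfl⟩
  have hrange : ∀ i, DOccursAt ω i → i ∈ Set.range f := fun i hi => by
    obtain ⟨k, -, hk⟩ := (h.2 _).1 (dOccursAt_iff.1 hi).2
    exact ⟨k, by simp only [f]; have := (dOccursAt_iff.1 hi).1; omega⟩
  have hinf' : (Set.ofPred (DOccursAt ω)).Infinite := by
    refine Set.infinite_of_forall_exists_gt fun i => ?_
    obtain ⟨k, hk, hik⟩ := hinf.exists_gt i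
    refine ⟨f k, (hocc k).2 hk, ?_⟩
    have := Nat.le_mul_of_pos_left k hpos
    simp only [f]
    omega
  rw [← Nat.nth_comp_of_strictMono hf hrange fun hfin => absurd hfin hinf']
  simp only [hocc, f]

/-- The return word of a factor whose occurrences are those of `x` scaled by `2^p` and shifted
by `t`, when `v` is the corresponding return word of `x` followed by the next letter. -/
def expand (p t : ℕ) (v : List Letter) : List Letter :=
  ((sigmaw^[p] v).drop t).take (2 ^ p * (v.length - 1))

lemma ScaledOcc.r_succ_eq {ω x : List Letter} {p t : ℕ} (h : ScaledOcc ω x p t)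
    (hinf : (Set.ofPred (OccAt x)).Infinite) (n : ℕ) :
    r ω (n + 1) = expand p t (seg (Nat.nth (OccAt x) n)
      (Nat.nth (OccAt x) (n + 1) - Nat.nth (OccAt x) n + 1)) := by
  rw [r, if_neg n.succ_ne_zero, L, L, Nat.add_sub_cancel, Nat.add_sub_cancel,
    h.nth_dOccursAt hinf, h.nth_dOccursAt hinf, expand, ← seg_two_pow_mul, length_seg,
    Nat.add_sub_cancel, take_drop_seg]
  · rw [Dseg_eq_seg, Nat.add_sub_cancel, Nat.mul_sub]
    congr 1
    omega
  · rw [mul_add_one, add_comm]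
    exact Nat.add_le_add_left h.1.le _

lemma D_mem (n : ℕ) : D n ∈ [a, b] := by
  have := D_ne_c n
  cases h : D n <;> simp_all

section SeedCoding

variable (k : ℕ) (x : List Letter) (τ κ : Letter → List Letter)

/-- The block after `σ^k(y)` in `D`, without its last letter, is `(A k).dropLast` whatever the
next letter of `D` is. -/
def window (y : Letter) : List Letter := sigmaw^[k] [y] ++ (A k).dropLast

lemma seg_eq_window (q : ℕ) : seg (2 ^ k * q) (2 ^ k + (2 ^ k - 1)) = window k (D q) := by
  rw [seg_add, seg_two_pow_mul_two_pow, show 2 ^ k * q + 2 ^ k = 2 ^ k * (q + 1) by ring,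
    ← dropLast_seg, seg_two_pow_mul_two_pow, dropLast_sigmaw_iterate (D_ne_c _), window]

def IsSlot (y : Letter) (i : ℕ) : Prop := ((window k y).drop i).take x.length = x

instance (y : Letter) : DecidablePred (IsSlot k x y) := fun _ =>
  inferInstanceAs (Decidable (_ = _))

def slots (y : Letter) : List ℕ := (List.range (2 ^ k)).filter (IsSlot k x y ·)

def slot (y : Letter) (j : ℕ) : ℕ := (slots k x y).getD j 0

def nextSlot (y : Letter) (j : ℕ) : ℕ :=
  if j + 1 < (τ y).length then slot k x y (j + 1) else 2 ^ k + slot k x a 0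

/-- The `n`-th letter (`n ≥ 1`) of `τ(D)`. -/
def theta (n : ℕ) : Letter := ((seg 0 n).flatMap τ).getD (n - 1) a

/-- Finitely checkable conditions saying that, in `D = σ^k(D)`, the occurrences of `x` starting
in the block of a letter `y` of `D` sit at the offsets `slots k x y`, one for each letter of
`τ y`, and that the return word at the `j`-th of them, followed by the next letter, is `κ` of
the `j`-th letter of `τ y`. -/
structure IsSeedCoding : Prop where
  length_le : x.length ≤ 2 ^ k
  length_pos : ∀ y ∈ [a, b], 0 < (τ y).length
  count_eq_length : ∀ y ∈ [a, b], Nat.count (IsSlot k x y) (2 ^ k) = (τ y).length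
  count_slot : ∀ y ∈ [a, b], ∀ j < (τ y).length, Nat.count (IsSlot k x y) (slot k x y j) = j
  slot_zero : slot k x a 0 = slot k x b 0
  nextSlot_lt : ∀ y ∈ [a, b], ∀ j < (τ y).length, nextSlot k x τ y j < 2 ^ k + (2 ^ k - 1)
  take_drop_window : ∀ y ∈ [a, b], ∀ j < (τ y).length,
    ((window k y).drop (slot k x y j)).take (nextSlot k x τ y j - slot k x y j + 1) =
      κ ((τ y).getD j a)

variable {k x τ κ}

lemma IsSeedCoding.slot_lt_and_isSlot (h : IsSeedCoding k x τ κ) {y : Letter} (hy : y ∈ [a, b])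
    {j : ℕ} (hj : j < (τ y).length) : slot k x y j < 2 ^ k ∧ IsSlot k x y (slot k x y j) := by
  have hlen : j < (slots k x y).length := by
    unfold slots
    rwa [← List.countP_eq_length_filter, ← Nat.count, h.count_eq_length y hy]
  have hmem := List.getElem_mem hlen
  unfold slots at hmem
  rw [List.mem_filter, List.mem_range, decide_eq_true_iff] at hmem
  rwa [slot, List.getD_eq_getElem _ _ hlen]

lemma occAt_iff_isSlot (hx : x.length ≤ 2 ^ k) (q : ℕ) {i : ℕ} (hi : i < 2 ^ k) :
    OccAt x (2 ^ k * q + i) ↔ IsSlot k x (D q) i := by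
  rw [OccAt, IsSlot, ← seg_eq_window, take_drop_seg (by omega)]

lemma count_occAt_add (hx : x.length ≤ 2 ^ k) (q : ℕ) {i : ℕ} (hi : i ≤ 2 ^ k) :
    Nat.count (OccAt x) (2 ^ k * q + i) =
      Nat.count (OccAt x) (2 ^ k * q) + Nat.count (IsSlot k x (D q)) i := by
  rw [Nat.count_add]
  congr 1
  simp only [Nat.count_eq_card_filter_range]
  exact congrArg _ (Finset.filter_congr fun j hj =>
    occAt_iff_isSlot hx q ((Finset.mem_range.1 hj).trans_le hi))

def cnt (τ : Letter → List Letter) (q : ℕ) : ℕ := ((seg 0 q).flatMap τ).length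

lemma cnt_succ (q : ℕ) : cnt τ (q + 1) = cnt τ q + (τ (D q)).length := by
  simp [cnt, seg_add, seg_one]

lemma IsSeedCoding.le_cnt (h : IsSeedCoding k x τ κ) (q : ℕ) : q ≤ cnt τ q := by
  induction q with
  | zero => exact Nat.zero_le _
  | succ q ih =>
    have := h.length_pos _ (D_mem q)
    rw [cnt_succ]
    omega

lemma IsSeedCoding.count_occAt_mul (h : IsSeedCoding k x τ κ) (q : ℕ) :
    Nat.count (OccAt x) (2 ^ k * q) = cnt τ q := by
  induction q with
  | zero => simp [cnt, seg]
  | succ q ih =>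
    rw [mul_add_one, count_occAt_add h.length_le q le_rfl, ih, h.count_eq_length _ (D_mem q),
      cnt_succ]

lemma IsSeedCoding.nth_cnt_add (h : IsSeedCoding k x τ κ) {q j : ℕ}
    (hj : j < (τ (D q)).length) :
    Nat.nth (OccAt x) (cnt τ q + j) = 2 ^ k * q + slot k x (D q) j := by
  obtain ⟨hlt, hslot⟩ := h.slot_lt_and_isSlot (D_mem q) hj
  have hcount : Nat.count (OccAt x) (2 ^ k * q + slot k x (D q) j) = cnt τ q + j := by
    rw [count_occAt_add h.length_le q hlt.le, h.count_occAt_mul, h.count_slot _ (D_mem q) j hj]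
  rw [← hcount]
  exact Nat.nth_count ((occAt_iff_isSlot h.length_le q hlt).2 hslot)

lemma IsSeedCoding.nth_cnt_add_add_one (h : IsSeedCoding k x τ κ) {q j : ℕ}
    (hj : j < (τ (D q)).length) :
    Nat.nth (OccAt x) (cnt τ q + j + 1) = 2 ^ k * q + nextSlot k x τ (D q) j := by
  rw [nextSlot]
  split_ifs with hj1
  · exact h.nth_cnt_add hj1
  · have h0 := h.nth_cnt_add (q := q + 1) (j := 0) (h.length_pos _ (D_mem _))
    rw [cnt_succ, add_zero, show cnt τ q + (τ (D q)).length = cnt τ q + j + 1 by omega] at h0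
    have hslot : slot k x (D (q + 1)) 0 = slot k x a 0 := by
      rcases List.mem_pair.1 (D_mem (q + 1)) with hD | hD <;> rw [hD]
      exact h.slot_zero.symm
    rw [h0, hslot]
    ring

lemma IsSeedCoding.exists_eq_cnt_add (h : IsSeedCoding k x τ κ) (n : ℕ) :
    ∃ q j, j < (τ (D q)).length ∧ n = cnt τ q + j := by
  induction n with
  | zero => exact ⟨0, 0, h.length_pos _ (D_mem 0), rfl⟩
  | succ n ih =>
    obtain ⟨q, j, hj, rfl⟩ := ih
    by_cases hj1 : j + 1 < (τ (D q)).length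
    · exact ⟨q, j + 1, hj1, rfl⟩
    · exact ⟨q + 1, 0, h.length_pos _ (D_mem _), by rw [cnt_succ]; omega⟩

lemma IsSeedCoding.theta_cnt_add_add_one (h : IsSeedCoding k x τ κ) {q j : ℕ}
    (hj : j < (τ (D q)).length) : theta τ (cnt τ q + j + 1) = (τ (D q)).getD j a := by
  have hq := h.le_cnt q
  rw [theta, Nat.add_sub_cancel, show cnt τ q + j + 1 = q + (1 + (cnt τ q + j - q)) by omega,
    seg_add, seg_add, seg_one, zero_add, List.flatMap_append, List.flatMap_append]
  simp only [List.flatMap_cons, List.flatMap_nil, List.append_nil]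
  rw [cnt, List.getD_append_right _ _ _ _ (Nat.le_add_right _ _), Nat.add_sub_cancel_left,
    List.getD_append _ _ _ _ hj]

lemma IsSeedCoding.seg_nth (h : IsSeedCoding k x τ κ) (n : ℕ) :
    seg (Nat.nth (OccAt x) n) (Nat.nth (OccAt x) (n + 1) - Nat.nth (OccAt x) n + 1) =
      κ (theta τ (n + 1)) := by
  obtain ⟨q, j, hj, rfl⟩ := h.exists_eq_cnt_add n
  have hnext := h.nextSlot_lt _ (D_mem q) j hj
  have hslot := (h.slot_lt_and_isSlot (D_mem q) hj).1
  rw [h.nth_cnt_add hj, h.nth_cnt_add_add_one hj, h.theta_cnt_add_add_one hj,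
    ← h.take_drop_window _ (D_mem q) j hj, ← seg_eq_window, take_drop_seg (by omega)]
  congr 1
  omega

lemma IsSeedCoding.infinite (h : IsSeedCoding k x τ κ) : (Set.ofPred (OccAt x)).Infinite :=
  Set.infinite_of_forall_exists_gt fun n => by
    obtain ⟨hlt, hslot⟩ := h.slot_lt_and_isSlot (D_mem (n + 1)) (h.length_pos _ (D_mem _))
    refine ⟨_, (occAt_iff_isSlot h.length_le (n + 1) hlt).2 hslot, ?_⟩
    have := Nat.le_mul_of_pos_left (n + 1) (pow_pos two_pos k)
    omega

lemma IsSeedCoding.r_eq (hs : IsSeedCoding k x τ κ) {ω : List Letter} {p t : ℕ}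
    (h : ScaledOcc ω x p t) {n : ℕ} (hn : 1 ≤ n) : r ω n = expand p t (κ (theta τ n)) := by
  obtain ⟨n, rfl⟩ := Nat.exists_eq_add_of_le' hn
  rw [h.r_succ_eq hs.infinite, hs.seg_nth]

lemma IsSeedCoding.r_eq_r (hs : IsSeedCoding k x τ κ) {ω : List Letter} {p t : ℕ}
    (h : ScaledOcc ω x p t) {n n' : ℕ} (hn : 1 ≤ n) (hn' : 1 ≤ n')
    (hθ : theta τ n = theta τ n') : r ω n = r ω n' := by
  rw [hs.r_eq h hn, hs.r_eq h hn', hθ]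

end SeedCoding

def kappa1 : Letter → List Letter
  | .a => [a, b, a]
  | .b => [a, a]
  | .c => []

def kappa2 : Letter → List Letter
  | .a => [a, a]
  | .b => [a, a, b, a, b, a, b, a]
  | .c => [a, a, b, a]

lemma isSeedCoding_tau1 : IsSeedCoding 1 [a] (fun y => tau1 [y]) kappa1 := by
  constructor <;> decide

lemma isSeedCoding_tau2 : IsSeedCoding 3 [a, a] (fun y => tau2 [y]) kappa2 := by
  constructor <;> decide

lemma theta_tau1 : theta (fun y => tau1 [y]) = Theta1 := by
  funext n
  simp [theta, Theta1, tau1, Dseg_eq_seg]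

lemma theta_tau2 : theta (fun y => tau2 [y]) = Theta2 := by
  funext n
  simp [theta, Theta2, tau2, Dseg_eq_seg]

lemma Theta1_one : Theta1 1 = a := by decide

lemma Theta1_two : Theta1 2 = b := by decide

lemma Theta2_one : Theta2 1 = a := by decide

lemma Theta2_two : Theta2 2 = b := by decide

lemma Theta2_four : Theta2 4 = c := by decide

lemma E1_ne_E2_succ (m j : ℕ) : E1 m ≠ E2 (j + 1) := by
  intro h
  have hlen := congrArg List.length h
  rw [E1_eq_seg, E2_succ_eq_seg, length_seg, length_seg] at hlen
  have h3 : 3 ∣ 2 ^ m := ⟨2 ^ j, by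
    have := Nat.one_le_two_pow (n := j)
    have := Nat.one_le_two_pow (n := m)
    rw [pow_succ] at hlen
    omega⟩
  exact absurd (Nat.prime_three.dvd_of_dvd_pow h3) (by norm_num)

lemma even_envIndex_of_Env_eq_E1 {ω : List Letter} {m : ℕ} (h : Env ω = E1 m) :
    Even (envIndex ω) := by
  obtain ⟨j, hj | hj⟩ := Nat.even_or_odd' (envIndex ω)
  · exact ⟨j, by omega⟩
  · have h' : Eword (envIndex ω) = E1 m := h
    rw [hj, Eword_two_mul_add_one] at h'
    exact absurd h'.symm (E1_ne_E2_succ m j)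

lemma not_even_envIndex_of_Env_eq_E2 {ω : List Letter} {m : ℕ} (hm : 1 ≤ m)
    (h : Env ω = E2 m) : ¬Even (envIndex ω) := by
  rintro ⟨j, hj⟩
  have h' : Eword (envIndex ω) = E2 m := h
  obtain ⟨m, rfl⟩ := Nat.exists_eq_add_of_le' hm
  rw [hj, ← two_mul, Eword_two_mul] at h'
  exact E1_ne_E2_succ _ _ h'

end PeriodDoubling

/-- Let ω be an arbitrary (nonempty) factor of D.
(1) If Env(ω) = E_{1,m} (m ≥ 1) then for every p ≥ 1, r_p(ω) = r_1(ω) if Θ₁[p] = a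
and r_p(ω) = r_2(ω) if Θ₁[p] = b.
(2) If Env(ω) = E_{2,m} (m ≥ 1) then for every p ≥ 1, r_p(ω) = r_1(ω) if Θ₂[p] = a,
r_p(ω) = r_2(ω) if Θ₂[p] = b, and r_p(ω) = r_4(ω) if Θ₂[p] = c. -/
theorem return_words_of_general_factor (ω : List Letter) (hfac : FactorD ω)
    (hne : ω ≠ []) :
    (∀ m : ℕ, 1 ≤ m → Env ω = E1 m → ∀ p : ℕ, 1 ≤ p →
      (Theta1 p = .a → r ω p = r ω 1) ∧
      (Theta1 p = .b → r ω p = r ω 2)) ∧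
    (∀ m : ℕ, 1 ≤ m → Env ω = E2 m → ∀ p : ℕ, 1 ≤ p →
      (Theta2 p = .a → r ω p = r ω 1) ∧
      (Theta2 p = .b → r ω p = r ω 2) ∧
      (Theta2 p = .c → r ω p = r ω 4)) := by
  open PeriodDoubling in
  obtain ⟨s, t, hscaled⟩ := exists_scaledOcc_envSeed hne (factorD_iff.1 hfac)
  refine ⟨fun m _ hEnv p hp => ?_, fun m hm hEnv p hp => ?_⟩
  · rw [envSeed, if_pos (even_envIndex_of_Env_eq_E1 hEnv)] at hscaled
    have hr : ∀ n, 1 ≤ n → Theta1 p = Theta1 n → r ω p = r ω n := fun n hn hθ =>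
      isSeedCoding_tau1.r_eq_r hscaled hp hn (by rwa [theta_tau1])
    exact ⟨fun hθ => hr 1 le_rfl (by rw [hθ, Theta1_one]),
      fun hθ => hr 2 one_le_two (by rw [hθ, Theta1_two])⟩
  · rw [envSeed, if_neg (not_even_envIndex_of_Env_eq_E2 hm hEnv)] at hscaled
    have hr : ∀ n, 1 ≤ n → Theta2 p = Theta2 n → r ω p = r ω n := fun n hn hθ =>
      isSeedCoding_tau2.r_eq_r hscaled hp hn (by rwa [theta_tau2])
    exact ⟨fun hθ => hr 1 le_rfl (by rw [hθ, Theta2_one]),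
      fun hθ => hr 2 one_le_two (by rw [hθ, Theta2_two]),
      fun hθ => hr 4 (by norm_num) (by rw [hθ, Theta2_four])⟩
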